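/- arXiv:1609.06809 — 7 statements merged into one kernel-verified Lean document; each statement's English description precedes it below -/
import Mathlib

section
/- Let G be a group, H a subgroup of G, and g an element of G. If H = (H ∩ g⁻¹Hg)(gHg⁻¹ ∩ H) and g is not in the normalizer of H in G, then g⁻¹ ∉ HgH. -/
/-!
Write every `h ∈ H` as `h = x * y` with `x ∈ H ∩ g⁻¹Hg` and `y ∈ gHg⁻¹ ∩ H`. If `g⁻¹ = h₁ g h₂`,
factoring `h₁` this way gives `1 = (g x g⁻¹) g² (g⁻¹ y g) h₂`, so `g² ∈ H`. Conjugating a factored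
`h` by `g` or `g⁻¹` and inserting `g² g⁻²` expresses `g h g⁻¹` and `g⁻¹ h g` as products of elements
of `H`, so `g` normalizes `H`.
-/

open scoped Pointwise

namespace Subgroup

variable {G : Type*} [Group G] {H : Subgroup G} {g : G}

theorem mem_normalizer_of_forall_conj_mem (hconj : ∀ h ∈ H, g * h * g⁻¹ ∈ H)
    (hconj_inv : ∀ h ∈ H, g⁻¹ * h * g ∈ H) : g ∈ normalizer (H : Set G) := by
  refine mem_normalizer_iff.2 fun h => ⟨hconj h, fun hh => ?_⟩
  simpa [mul_assoc] using hconj_inv _ hh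

theorem forall_exists_mul_eq_of_eq_inter_mul_inter
    (hfac : (H : Set G) =
      ((H : Set G) ∩ {x | ∃ h ∈ H, x = g⁻¹ * h * g}) *
      ({x | ∃ h ∈ H, x = g * h * g⁻¹} ∩ (H : Set G))) :
    ∀ h ∈ H, ∃ x ∈ H, ∃ y ∈ H, g * x * g⁻¹ ∈ H ∧ g⁻¹ * y * g ∈ H ∧ x * y = h := by
  intro h hh
  rw [← SetLike.mem_coe, hfac] at hh
  obtain ⟨_, ⟨hx, a, ha, rfl⟩, _, ⟨⟨b, hb, rfl⟩, hy⟩, hxy⟩ := hh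
  exact ⟨_, hx, _, hy, by simpa [mul_assoc], by simpa [mul_assoc], hxy⟩

theorem mul_self_mem_of_inv_eq_mul_mul
    (hfac : ∀ h ∈ H, ∃ x ∈ H, ∃ y ∈ H, g * x * g⁻¹ ∈ H ∧ g⁻¹ * y * g ∈ H ∧ x * y = h)
    {h₁ h₂ : G} (hh₁ : h₁ ∈ H) (hh₂ : h₂ ∈ H) (hinv : g⁻¹ = h₁ * g * h₂) : g * g ∈ H := by
  obtain ⟨x, -, y, -, hx, hy, rfl⟩ := hfac h₁ hh₁
  have hone : (g * x * g⁻¹) * (g * g) * ((g⁻¹ * y * g) * h₂) = 1 := by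
    calc _ = g * (x * y * g * h₂) := by group
      _ = 1 := by rw [← hinv, mul_inv_cancel]
  rw [eq_inv_mul_of_mul_eq (mul_eq_one_iff_eq_inv.1 hone)]
  exact mul_mem (inv_mem hx) (inv_mem (mul_mem hy hh₂))

theorem mem_normalizer_of_mul_self_mem
    (hfac : ∀ h ∈ H, ∃ x ∈ H, ∃ y ∈ H, g * x * g⁻¹ ∈ H ∧ g⁻¹ * y * g ∈ H ∧ x * y = h)
    (hsq : g * g ∈ H) : g ∈ normalizer (H : Set G) := by
  refine mem_normalizer_of_forall_conj_mem (fun h hh => ?_) (fun h hh => ?_)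
  · obtain ⟨x, -, y, -, hx, hy, rfl⟩ := hfac h hh
    have : g * (x * y) * g⁻¹ = (g * x * g⁻¹) * ((g * g) * (g⁻¹ * y * g) * (g * g)⁻¹) := by group
    rw [this]
    exact mul_mem hx (mul_mem (mul_mem hsq hy) (inv_mem hsq))
  · obtain ⟨x, -, y, -, hx, hy, rfl⟩ := hfac h hh
    have : g⁻¹ * (x * y) * g = (g * g)⁻¹ * (g * x * g⁻¹) * (g * g) * (g⁻¹ * y * g) := by group
    rw [this]
    exact mul_mem (mul_mem (mul_mem (inv_mem hsq) hx) hsq) hy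

end Subgroup

theorem stmt_0 {G : Type*} [Group G] (H : Subgroup G) (g : G)
    (hfac : (H : Set G) =
      ((H : Set G) ∩ {x | ∃ h ∈ H, x = g⁻¹ * h * g}) *
      ({x | ∃ h ∈ H, x = g * h * g⁻¹} ∩ (H : Set G)))
    (hg : g ∉ Subgroup.normalizer (H : Set G)) :
    g⁻¹ ∉ {x | ∃ h₁ ∈ H, ∃ h₂ ∈ H, x = h₁ * g * h₂} := by
  rintro ⟨h₁, hh₁, h₂, hh₂, hinv⟩
  have hfac' := Subgroup.forall_exists_mul_eq_of_eq_inter_mul_inter hfac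
  exact hg (Subgroup.mem_normalizer_of_mul_self_mem hfac'
    (Subgroup.mul_self_mem_of_inv_eq_mul_mul hfac' hh₁ hh₂ hinv))
end

section
/- Let p > 3 be a prime with p ≡ ±2 (mod 5) and p ≡ 1 (mod 3), and let a, b ∈ F_{p²} with a² + a − 1 = 0 and b² + b + 1 = 0. Set d = −2(a − b). Then d^(p+1) = −8 and consequently d^((p²−1)/3) = 1, i.e., d is a nonzero cube in F_{p²}. -/
/-!
Let `σ` be the Frobenius `x ↦ x ^ p`. Since `b ^ 3 = 1` and `p ≡ 1 (mod 3)`, `σ` fixes `b`. It permutes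
the roots `a` and `-1 - a` of `X ^ 2 + X - 1`, and cannot fix `a`: otherwise `2 * a + 1`, a square root
of `5`, would lie in the prime field, whereas by quadratic reciprocity `5` is not a square mod `p`
when `p ≡ ±2 (mod 5)`. Hence, using the two quadratic relations,
`d ^ (p + 1) = d * σ d = 4 * (a - b) * (-1 - a - b) = -8`, and then
`d ^ ((p ^ 2 - 1) / 3) = (-8) ^ ((p - 1) / 3) = (-2) ^ (p - 1) = 1`.
-/

namespace ZMod

theorem not_isSquare_five {p : ℕ} [Fact p.Prime] (hp2 : p ≠ 2) (hp5 : p % 5 = 2 ∨ p % 5 = 3) :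
    ¬ IsSquare (5 : ZMod p) := by
  have h := @exists_sq_eq_prime_iff_of_mod_four_eq_one 5 p ⟨Nat.prime_five⟩ _ (by norm_num) hp2
  rw [Nat.cast_ofNat] at h
  rw [← h, ← ZMod.natCast_mod]
  rcases hp5 with h5 | h5 <;> rw [h5] <;> decide

end ZMod

theorem intCast_pow_char {R : Type*} [CommRing R] (p : ℕ) [ExpChar R p] (n : ℤ) :
    (n : R) ^ p = n := by
  simpa only [frobenius_def] using map_intCast (frobenius R p) n

theorem pow_pred_eq_one_of_pow_eq_self {M : Type*} [MonoidWithZero M] [IsRightCancelMulZero M]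
    {x : M} {n : ℕ} (hx0 : x ≠ 0) (hn : n ≠ 0) (hx : x ^ n = x) : x ^ (n - 1) = 1 := by
  refine mul_right_cancel₀ hx0 ?_
  rw [← pow_succ, Nat.sub_add_cancel (Nat.one_le_iff_ne_zero.mpr hn), hx, one_mul]

section CharP

variable {K : Type*} [Field K] {p : ℕ} [Fact p.Prime] [CharP K p]

theorem isSquare_of_sq_eq_of_pow_char_eq_self (hp2 : p ≠ 2) {x : K} {c : ZMod p}
    (hx : x ^ p = x) (hc : x ^ 2 = ZMod.castHom dvd_rfl K c) : IsSquare c := by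
  rcases eq_or_ne c 0 with rfl | hc0
  · exact IsSquare.zero
  have hx0 : x ≠ 0 := by
    rintro rfl
    exact hc0 ((ZMod.castHom dvd_rfl K).injective (by simpa using hc.symm))
  have hp_odd : p % 2 = 1 := (Fact.out : p.Prime).eq_two_or_odd.resolve_left hp2
  rw [ZMod.euler_criterion p hc0]
  apply (ZMod.castHom dvd_rfl K).injective
  rw [map_pow, ← hc, ← pow_mul, Nat.two_mul_odd_div_two hp_odd,
    pow_pred_eq_one_of_pow_eq_self hx0 (NeZero.ne p) hx, map_one]

theorem pow_char_of_sq_add_self_sub_one (hp2 : p ≠ 2) (hp5 : p % 5 = 2 ∨ p % 5 = 3) {a : K}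
    (ha : a ^ 2 + a - 1 = 0) : a ^ p = -1 - a := by
  have hconj : (a ^ p) ^ 2 + a ^ p - 1 = 0 := by
    simpa only [map_sub, map_add, map_pow, map_one, map_zero, frobenius_def]
      using congrArg (frobenius K p) ha
  rcases mul_eq_zero.mp (show (a ^ p - a) * (a ^ p + 1 + a) = 0 by
      linear_combination hconj - ha) with hfix | hconj_root
  · refine absurd ?_ (ZMod.not_isSquare_five hp2 hp5)
    refine isSquare_of_sq_eq_of_pow_char_eq_self hp2 (x := 2 * a + 1) ?_ ?_
    · rw [add_pow_char, mul_pow, sub_eq_zero.mp hfix, one_pow,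
        show (2 : K) ^ p = 2 by exact_mod_cast intCast_pow_char (R := K) p 2]
    · rw [map_ofNat]
      linear_combination 4 * ha
  · linear_combination hconj_root

theorem neg_two_mul_sub_pow_char_add_one (hp5 : p % 5 = 2 ∨ p % 5 = 3) (hp3 : p % 3 = 1)
    {a b : K} (ha : a ^ 2 + a - 1 = 0) (hb : b ^ 2 + b + 1 = 0) :
    (-2 * (a - b)) ^ (p + 1) = -8 := by
  have hp2 : p ≠ 2 := by rintro rfl; norm_num at hp3
  have hap := pow_char_of_sq_add_self_sub_one hp2 hp5 ha
  have hbp : b ^ p = b := by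
    rw [pow_eq_pow_mod p (show b ^ 3 = 1 by linear_combination (b - 1) * hb), hp3, pow_one]
  have hdp : (-2 * (a - b)) ^ p = -2 * (-1 - a - b) := by
    rw [mul_pow, sub_pow_char, hap, hbp,
      show (-2 : K) ^ p = -2 by exact_mod_cast intCast_pow_char (R := K) p (-2)]
  rw [pow_succ, hdp]
  linear_combination -4 * ha + 4 * hb

theorem pow_div_three_eq_one_of_pow_char_add_one_eq_neg_eight (hp3 : p % 3 = 1) {d : K}
    (hd : d ^ (p + 1) = -8) : d ^ ((p ^ 2 - 1) / 3) = 1 := by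
  have hp2 : p ≠ 2 := by rintro rfl; norm_num at hp3
  have hexp : (p ^ 2 - 1) / 3 = (p + 1) * ((p - 1) / 3) := by
    rw [show p ^ 2 - 1 = p ^ 2 - 1 ^ 2 by rw [one_pow], Nat.sq_sub_sq,
      Nat.mul_div_assoc _ (by omega : 3 ∣ p - 1)]
  have hn2 : (-2 : K) ^ p = -2 := by exact_mod_cast intCast_pow_char (R := K) p (-2)
  have hn2_ne : (-2 : K) ≠ 0 := neg_ne_zero.mpr (Ring.two_ne_zero (by rwa [ringChar.eq K p]))
  rw [hexp, pow_mul, hd, show (-8 : K) = (-2) ^ 3 by norm_num, ← pow_mul,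
    Nat.mul_div_cancel' (by omega : 3 ∣ p - 1)]
  exact pow_pred_eq_one_of_pow_eq_self hn2_ne (NeZero.ne p) hn2

end CharP

theorem stmt_8_general (p : ℕ) [Fact p.Prime]
    (hp5 : p % 5 = 2 ∨ p % 5 = 3) (hp3 : p % 3 = 1)
    (a b : GaloisField p 2) (ha : a ^ 2 + a - 1 = 0) (hb : b ^ 2 + b + 1 = 0) :
    (-2 * (a - b)) ^ (p + 1) = -8 ∧ (-2 * (a - b)) ^ ((p ^ 2 - 1) / 3) = 1 := by
  have hd := neg_two_mul_sub_pow_char_add_one hp5 hp3 ha hb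
  exact ⟨hd, pow_div_three_eq_one_of_pow_char_add_one_eq_neg_eight hp3 hd⟩

theorem stmt_8 (p : ℕ) [Fact p.Prime] (hp : 3 < p)
    (hp5 : p % 5 = 2 ∨ p % 5 = 3) (hp3 : p % 3 = 1)
    (a b : GaloisField p 2) (ha : a ^ 2 + a - 1 = 0) (hb : b ^ 2 + b + 1 = 0) :
    (-2 * (a - b)) ^ (p + 1) = -8 ∧ (-2 * (a - b)) ^ ((p ^ 2 - 1) / 3) = 1 :=
  stmt_8_general p hp5 hp3 a b ha hb
end

section
/- Let p > 3 be a prime and a ∈ F_{p²} with a² + a − 1 = 0. The characteristic polynomial of the 3×3 matrix X over F_{p²} with rows (a⁻¹, 1, −a), (−1, a, −a⁻¹), (−a, a⁻¹, 1) equals (λ − 2)(λ² − 2aλ + 4), and moreover (λ − 2)(λ² − 2aλ + 4)(λ² + 2aλ + 2λ + 4) = λ⁵ − 32. -/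
/-!
Since `a² = 1 - a`, the inverse of `a` is `a + 1`, so the matrix has entries in `ℤ[a]`.
Its characteristic polynomial, expanded by the rule of Sarrus, differs from
`(λ - 2)(λ² - 2aλ + 4)` by `(λ - 6)(a² + a - 1)`, and the quintic product differs from
`λ⁵ - 32` by `(8λ² - 4λ³)(a² + a - 1)`.
-/

open Polynomial

theorem inv_eq_add_one_of_sq_add_sub_one_eq_zero {K : Type*} [Field K] {a : K}
    (ha : a ^ 2 + a - 1 = 0) : a⁻¹ = a + 1 :=
  inv_eq_of_mul_eq_one_right (by linear_combination ha)

section GoldenRoot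

variable {R : Type*} [CommRing R] {a : R}

theorem C_sq_add_C_sub_one_eq_zero (ha : a ^ 2 + a - 1 = 0) :
    (C a ^ 2 + C a - 1 : R[X]) = 0 := by
  simpa using congrArg C ha

theorem charpoly_golden_matrix (ha : a ^ 2 + a - 1 = 0) :
    (!![a + 1, 1, -a; -1, a, -(a + 1); -a, a + 1, 1] : Matrix (Fin 3) (Fin 3) R).charpoly
      = (X - C 2) * (X ^ 2 - C (2 * a) * X + C 4) := by
  rw [Matrix.charpoly, Matrix.det_fin_three]
  simp only [Matrix.charmatrix_apply_eq, Matrix.charmatrix_apply_ne, ne_eq, Fin.reduceEq,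
    not_false_eq_true, Matrix.of_apply, Matrix.cons_val', Matrix.cons_val_zero, Matrix.cons_val_one,
    Matrix.cons_val, Matrix.cons_val_fin_one, map_ofNat, map_mul, map_add, map_neg, map_one]
  linear_combination (X - 6) * C_sq_add_C_sub_one_eq_zero ha

theorem golden_quintic_factorization (ha : a ^ 2 + a - 1 = 0) :
    (X - C 2) * (X ^ 2 - C (2 * a) * X + C 4) * (X ^ 2 + C (2 * a) * X + 2 * X + C 4)
      = (X ^ 5 - C 32 : R[X]) := by
  simp only [map_ofNat, map_mul]
  linear_combination (8 * X ^ 2 - 4 * X ^ 3) * C_sq_add_C_sub_one_eq_zero ha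

end GoldenRoot

open Polynomial in
theorem stmt_11_general (p : ℕ) [Fact p.Prime]
    (a : GaloisField p 2) (ha : a ^ 2 + a - 1 = 0) :
    (!![a⁻¹, 1, -a; -1, a, -a⁻¹; -a, a⁻¹, 1] :
        Matrix (Fin 3) (Fin 3) (GaloisField p 2)).charpoly
      = (X - C 2) * (X ^ 2 - C (2 * a) * X + C 4) ∧
    (X - C 2) * (X ^ 2 - C (2 * a) * X + C 4) * (X ^ 2 + C (2 * a) * X + 2 * X + C 4)
      = (X ^ 5 - C 32 : Polynomial (GaloisField p 2)) := by
  rw [inv_eq_add_one_of_sq_add_sub_one_eq_zero ha]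
  exact ⟨charpoly_golden_matrix ha, golden_quintic_factorization ha⟩

open Polynomial in
theorem stmt_11 (p : ℕ) [Fact p.Prime] (hp : 3 < p)
    (a : GaloisField p 2) (ha : a ^ 2 + a - 1 = 0) :
    (!![a⁻¹, 1, -a; -1, a, -a⁻¹; -a, a⁻¹, 1] :
        Matrix (Fin 3) (Fin 3) (GaloisField p 2)).charpoly
      = (X - C 2) * (X ^ 2 - C (2 * a) * X + C 4) ∧
    (X - C 2) * (X ^ 2 - C (2 * a) * X + C 4) * (X ^ 2 + C (2 * a) * X + 2 * X + C 4)
      = (X ^ 5 - C 32 : Polynomial (GaloisField p 2)) :=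
  stmt_11_general p a ha
end

section
/- Let p > 3 be a prime, p ≡ ±2 (mod 5), and a ∈ F_{p²} with a² + a − 1 = 0. Let X be the 3×3 matrix over F_{p²} with rows (a⁻¹, 1, −a), (−1, a, −a⁻¹), (−a, a⁻¹, 1). Then X⁵ = 32·I, the 3×3 identity matrix scaled by 32. -/
/-!
Up to the factor 2, `X` is a rotation of order 5 (a rotation of the icosahedron): with `a⁻¹ = a + 1`
the rows of `X` are pairwise orthogonal of squared length `4`, so `Xᵀ * X = 4`, and squaring twice
gives `X ^ 4 = 8 • Xᵀ`. Hence `X ^ 5 = 8 • Xᵀ * X = 32`.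
-/

open Matrix

section

variable {R : Type*} [CommRing R]

/-- The matrix `X` of the statement, with `a⁻¹` written as `a + 1`. -/
def pentagonalMatrix (a : R) : Matrix (Fin 3) (Fin 3) R :=
  !![a + 1, 1, -a; -1, a, -(a + 1); -a, a + 1, 1]

variable {a : R}

theorem pentagonalMatrix_transpose_mul_self (ha : a ^ 2 + a - 1 = 0) :
    (pentagonalMatrix a)ᵀ * pentagonalMatrix a = (4 : R) • 1 := by
  ext i j
  fin_cases i <;> fin_cases j <;>
    simp [pentagonalMatrix, mul_apply, Fin.sum_univ_three, one_apply] <;> grind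

theorem pentagonalMatrix_sq (ha : a ^ 2 + a - 1 = 0) :
    pentagonalMatrix a ^ 2 = (2 : R) • !![1, a, -a - 1; -a, -a - 1, -1; -a - 1, 1, -a] := by
  ext i j
  fin_cases i <;> fin_cases j <;>
    simp [pentagonalMatrix, sq, mul_apply, Fin.sum_univ_three] <;> grind

theorem pentagonalMatrix_pow_four (ha : a ^ 2 + a - 1 = 0) :
    pentagonalMatrix a ^ 4 = (8 : R) • (pentagonalMatrix a)ᵀ := by
  rw [show 4 = 2 * 2 from rfl, pow_mul, pentagonalMatrix_sq ha]
  ext i j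
  fin_cases i <;> fin_cases j <;>
    simp [pentagonalMatrix, sq, mul_apply, Fin.sum_univ_three] <;> grind

theorem pentagonalMatrix_pow_five (ha : a ^ 2 + a - 1 = 0) :
    pentagonalMatrix a ^ 5 = (32 : R) • 1 := by
  rw [pow_succ, pentagonalMatrix_pow_four ha, smul_mul_assoc,
    pentagonalMatrix_transpose_mul_self ha, smul_smul]
  norm_num

end

theorem stmt_12_general (p : ℕ) [Fact p.Prime]
    (a : GaloisField p 2) (ha : a ^ 2 + a - 1 = 0) :
    (!![a⁻¹, 1, -a; -1, a, -a⁻¹; -a, a⁻¹, 1] :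
        Matrix (Fin 3) (Fin 3) (GaloisField p 2)) ^ 5
      = (32 : GaloisField p 2) • (1 : Matrix (Fin 3) (Fin 3) (GaloisField p 2)) := by
  have hinv : a⁻¹ = a + 1 := inv_eq_of_mul_eq_one_right (by linear_combination ha)
  rw [hinv]
  exact pentagonalMatrix_pow_five ha

theorem stmt_12 (p : ℕ) [Fact p.Prime] (hp : 3 < p)
    (hp5 : p % 5 = 2 ∨ p % 5 = 3)
    (a : GaloisField p 2) (ha : a ^ 2 + a - 1 = 0) :
    (!![a⁻¹, 1, -a; -1, a, -a⁻¹; -a, a⁻¹, 1] :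
        Matrix (Fin 3) (Fin 3) (GaloisField p 2)) ^ 5
      = (32 : GaloisField p 2) • (1 : Matrix (Fin 3) (Fin 3) (GaloisField p 2)) :=
  stmt_12_general p a ha
end

section
/- Let p > 3 be a prime and a, b ∈ F_{p²} with a² + a − 1 = 0 and b² + b + 1 = 0. Let W be the 3×3 matrix over F_{p²} with rows (b+1, −a−b−1, −b), (−b, −ab−a−b, −1), (a−b, 0, ab+a+1). Then the characteristic polynomial of W equals (λ − 2)(λ² + 4), and W⁴ = 16·I. -/
/-!
Modulo `a² = 1 - a` and `b² = -b - 1`, the trace, the sum of the principal `2 × 2` minors and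
the determinant of `W` reduce to `2`, `4` and `8`, which are the coefficients of
`(X - 2)(X² + 4) = X³ - 2X² + 4X - 8`. Since `(X + 2)(X - 2)(X² + 4) = X⁴ - 16`,
Cayley–Hamilton then gives `W⁴ = 16`.
-/

open Polynomial

namespace Matrix

variable {R : Type*} [CommRing R]

theorem charpoly_fin_three (M : Matrix (Fin 3) (Fin 3) R) :
    M.charpoly = X ^ 3 - C M.trace * X ^ 2
      + C (M 0 0 * M 1 1 - M 0 1 * M 1 0 + M 0 0 * M 2 2 - M 0 2 * M 2 0
        + M 1 1 * M 2 2 - M 1 2 * M 2 1) * X - C M.det := by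
  simp only [charpoly, det_fin_three, trace_fin_three, charmatrix_apply, diagonal_apply,
    Fin.reduceEq, if_true, if_false, map_add, map_sub, map_mul]
  ring

theorem pow_four_eq_smul_one_of_charpoly_eq {n : Type*} [Fintype n] [DecidableEq n]
    (M : Matrix n n R) (c : R) (h : M.charpoly = (X - C c) * (X ^ 2 + C (c ^ 2))) :
    M ^ 4 = c ^ 4 • (1 : Matrix n n R) := by
  have hfactor : (X ^ 4 - C (c ^ 4) : R[X]) = (X + C c) * M.charpoly := by
    rw [h, map_pow, map_pow]; ring
  have hM := congrArg (aeval M) hfactor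
  rwa [map_mul, aeval_self_charpoly, mul_zero, map_sub, aeval_X_pow, aeval_C,
    Algebra.algebraMap_eq_smul_one, sub_eq_zero] at hM

end Matrix

section

open Matrix

variable {R : Type*} [CommRing R]

def W (a b : R) : Matrix (Fin 3) (Fin 3) R :=
  !![b + 1, -a - b - 1, -b; -b, -(a * b) - a - b, -1; a - b, 0, a * b + a + 1]

theorem W_trace (a b : R) : (W a b).trace = 2 := by
  rw [trace_fin_three]
  simp only [W, of_apply, cons_val', cons_val_zero, cons_val_one, cons_val, cons_val_fin_one]
  ring

theorem W_det {a b : R} (ha : a ^ 2 + a - 1 = 0) (hb : b ^ 2 + b + 1 = 0) :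
    (W a b).det = 8 := by
  rw [det_fin_three]
  simp only [W, of_apply, cons_val', cons_val_zero, cons_val_one, cons_val, cons_val_fin_one]
  grind

theorem W_charpoly {a b : R} (ha : a ^ 2 + a - 1 = 0) (hb : b ^ 2 + b + 1 = 0) :
    (W a b).charpoly = (X - C 2) * (X ^ 2 + C 4) := by
  have hminors : W a b 0 0 * W a b 1 1 - W a b 0 1 * W a b 1 0 + W a b 0 0 * W a b 2 2
      - W a b 0 2 * W a b 2 0 + W a b 1 1 * W a b 2 2 - W a b 1 2 * W a b 2 1 = 4 := by
    simp only [W, of_apply, cons_val', cons_val_zero, cons_val_one, cons_val, cons_val_fin_one]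
    grind
  rw [charpoly_fin_three, hminors, W_trace, W_det ha hb]
  simp only [map_ofNat]
  ring

end

open Polynomial in
theorem stmt_14_general (p : ℕ) [Fact p.Prime]
    (a b : GaloisField p 2) (ha : a ^ 2 + a - 1 = 0) (hb : b ^ 2 + b + 1 = 0) :
    (!![b + 1, -a - b - 1, -b; -b, -(a * b) - a - b, -1; a - b, 0, a * b + a + 1] :
        Matrix (Fin 3) (Fin 3) (GaloisField p 2)).charpoly
      = (X - C 2) * (X ^ 2 + C 4) ∧
    (!![b + 1, -a - b - 1, -b; -b, -(a * b) - a - b, -1; a - b, 0, a * b + a + 1] :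
        Matrix (Fin 3) (Fin 3) (GaloisField p 2)) ^ 4
      = (16 : GaloisField p 2) • (1 : Matrix (Fin 3) (Fin 3) (GaloisField p 2)) := by
  have hW := W_charpoly ha hb
  refine ⟨hW, ?_⟩
  have hW4 := (W a b).pow_four_eq_smul_one_of_charpoly_eq 2 (by rw [hW]; norm_num)
  norm_num at hW4
  exact hW4

open Polynomial in
theorem stmt_14 (p : ℕ) [Fact p.Prime] (hp : 3 < p)
    (a b : GaloisField p 2) (ha : a ^ 2 + a - 1 = 0) (hb : b ^ 2 + b + 1 = 0) :
    (!![b + 1, -a - b - 1, -b; -b, -(a * b) - a - b, -1; a - b, 0, a * b + a + 1] :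
        Matrix (Fin 3) (Fin 3) (GaloisField p 2)).charpoly
      = (X - C 2) * (X ^ 2 + C 4) ∧
    (!![b + 1, -a - b - 1, -b; -b, -(a * b) - a - b, -1; a - b, 0, a * b + a + 1] :
        Matrix (Fin 3) (Fin 3) (GaloisField p 2)) ^ 4
      = (16 : GaloisField p 2) • (1 : Matrix (Fin 3) (Fin 3) (GaloisField p 2)) :=
  stmt_14_general p a b ha hb
end

section
/- Let p > 3 be a prime and a, b ∈ F_{p²} with a² + a − 1 = 0 and b² + b + 1 = 0. Let Y be the 3×3 matrix with rows (ab+a+b+1, b+1, −ab−a), (−a, a+1, 1), (−b, ab, −ab−b). Then the characteristic polynomial of Y equals (λ − 2)(λ² − 2aλ + 4), and Y⁵ = 32·I. -/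
/-!
Over any commutative ring, expanding the determinant and reducing modulo `a² + a - 1` and
`b² + b + 1` gives the characteristic polynomial `(X - 2)(X² - 2aX + 4)`. With `X = 2t` the
quadratic factor becomes `4(t² - at + 1)`, and `a² + a = 1` makes `t² - at + 1` a factor of
`t⁴ + t³ + t² + t + 1`, so the characteristic polynomial divides `X⁵ - 32`; Cayley–Hamilton
then gives `Y⁵ = 32`.
-/

open Polynomial

namespace Matrix

variable {n R : Type*} [Fintype n] [DecidableEq n] [CommRing R]

theorem pow_eq_smul_one_of_charpoly_dvd {M : Matrix n n R} {k : ℕ} {c : R}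
    (h : M.charpoly ∣ X ^ k - C c) : M ^ k = c • 1 := by
  obtain ⟨q, hq⟩ := h
  have := congrArg (aeval M) hq
  rw [map_mul, aeval_self_charpoly, zero_mul, map_sub, map_pow, aeval_X, aeval_C,
    Algebra.algebraMap_eq_smul_one, sub_eq_zero] at this
  exact this

end Matrix

section

variable {R : Type*} [CommRing R]

def yxMatrix (a b : R) : Matrix (Fin 3) (Fin 3) R :=
  !![a * b + a + b + 1, b + 1, -(a * b) - a; -a, a + 1, 1; -b, a * b, -(a * b) - b]

theorem charpoly_yxMatrix {a b : R} (ha : a ^ 2 + a - 1 = 0) (hb : b ^ 2 + b + 1 = 0) :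
    (yxMatrix a b).charpoly = (X - C 2) * (X ^ 2 - C (2 * a) * X + C 4) := by
  have ha' : (C a : R[X]) ^ 2 + C a - 1 = 0 := by
    simp only [← C_pow, ← C_add, ← C_1, ← C_sub, ha, C_0]
  have hb' : (C b : R[X]) ^ 2 + C b + 1 = 0 := by
    simp only [← C_pow, ← C_add, ← C_1, hb, C_0]
  rw [Matrix.charpoly, Matrix.det_fin_three]
  simp only [yxMatrix, Fin.isValue, Matrix.charmatrix_apply_eq, Matrix.of_apply, Matrix.cons_val',
    Matrix.cons_val_zero, Matrix.cons_val_fin_one, map_add, map_mul, map_one, Matrix.cons_val_one,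
    Matrix.cons_val, map_sub, map_neg, ne_eq, Fin.reduceEq, not_false_eq_true,
    Matrix.charmatrix_apply_ne, mul_neg, mul_one, neg_sub, sub_neg_eq_add, zero_ne_one, neg_add_rev,
    one_ne_zero, neg_neg, map_ofNat]
  linear_combination (C b * 6 + C b ^ 2 * 6 + (1 - C b - C b ^ 2) * X) * ha' +
    (8 + (-2 - 2 * C a) * X) * hb'

theorem X_pow_five_sub_eq {a : R} (ha : a ^ 2 + a - 1 = 0) :
    (X ^ 5 - C 32 : R[X]) =
      (X - C 2) * (X ^ 2 - C (2 * a) * X + C 4) * (X ^ 2 + C (2 * (a + 1)) * X + C 4) := by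
  have ha' : (C a : R[X]) ^ 2 + C a - 1 = 0 := by
    simp only [← C_pow, ← C_add, ← C_1, ← C_sub, ha, C_0]
  simp only [C_mul, C_add, C_1, map_ofNat]
  linear_combination (4 * X ^ 3 - 8 * X ^ 2) * ha'

theorem yxMatrix_pow_five {a b : R} (ha : a ^ 2 + a - 1 = 0) (hb : b ^ 2 + b + 1 = 0) :
    yxMatrix a b ^ 5 = (32 : R) • 1 :=
  Matrix.pow_eq_smul_one_of_charpoly_dvd
    ⟨_, by rw [charpoly_yxMatrix ha hb, X_pow_five_sub_eq ha]⟩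

end

open Polynomial in
theorem stmt_15_general (p : ℕ) [Fact p.Prime]
    (a b : GaloisField p 2) (ha : a ^ 2 + a - 1 = 0) (hb : b ^ 2 + b + 1 = 0) :
    (!![a * b + a + b + 1, b + 1, -(a * b) - a; -a, a + 1, 1; -b, a * b, -(a * b) - b] :
        Matrix (Fin 3) (Fin 3) (GaloisField p 2)).charpoly
      = (X - C 2) * (X ^ 2 - C (2 * a) * X + C 4) ∧
    (!![a * b + a + b + 1, b + 1, -(a * b) - a; -a, a + 1, 1; -b, a * b, -(a * b) - b] :
        Matrix (Fin 3) (Fin 3) (GaloisField p 2)) ^ 5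
      = (32 : GaloisField p 2) • (1 : Matrix (Fin 3) (Fin 3) (GaloisField p 2)) :=
  ⟨charpoly_yxMatrix ha hb, yxMatrix_pow_five ha hb⟩

open Polynomial in
theorem stmt_15 (p : ℕ) [Fact p.Prime] (hp : 3 < p)
    (a b : GaloisField p 2) (ha : a ^ 2 + a - 1 = 0) (hb : b ^ 2 + b + 1 = 0) :
    (!![a * b + a + b + 1, b + 1, -(a * b) - a; -a, a + 1, 1; -b, a * b, -(a * b) - b] :
        Matrix (Fin 3) (Fin 3) (GaloisField p 2)).charpoly
      = (X - C 2) * (X ^ 2 - C (2 * a) * X + C 4) ∧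
    (!![a * b + a + b + 1, b + 1, -(a * b) - a; -a, a + 1, 1; -b, a * b, -(a * b) - b] :
        Matrix (Fin 3) (Fin 3) (GaloisField p 2)) ^ 5
      = (32 : GaloisField p 2) • (1 : Matrix (Fin 3) (Fin 3) (GaloisField p 2)) :=
  stmt_15_general p a b ha hb
end

section
/- In the alternating group A₆, any two distinct subgroups both isomorphic to A₅ intersect in a subgroup of order 10 or 12. -/
/-!
A copy of `A₅` in `A₆` has index `6`, so for two of them `K ≠ L` the intersection `K ⊓ L` has
index at most `36` in `A₆`, i.e. index at most `6` in `K`. On the other hand a simple group of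
order `60` acts faithfully on the cosets of any proper subgroup, so such a subgroup has index at
least `5` (as `60 ∤ 4!`). Hence `K ⊓ L` has index `5` or `6` in `K`, i.e. order `12` or `10`.
-/

open scoped Nat

namespace Subgroup

variable {G : Type*} [Group G]

theorem index_normalCore_dvd_factorial_index (H : Subgroup G) [H.FiniteIndex] :
    H.normalCore.index ∣ H.index ! := by
  rw [normalCore_eq_ker, index_ker, index_eq_card, ← Nat.card_perm]
  exact card_subgroup_dvd_card _

theorem card_dvd_factorial_index_of_isSimpleGroup [IsSimpleGroup G] [Finite G] {H : Subgroup G}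
    (hH : H ≠ ⊤) : Nat.card G ∣ H.index ! := by
  have hcore : H.normalCore = ⊥ :=
    H.normalCore_normal.eq_bot_or_eq_top.resolve_right fun h =>
      hH (top_le_iff.mp (h ▸ H.normalCore_le))
  simpa [hcore] using H.index_normalCore_dvd_factorial_index

theorem five_le_index_of_isSimpleGroup_of_card_eq_sixty [IsSimpleGroup G]
    (hG : Nat.card G = 60) {H : Subgroup G} (hH : H ≠ ⊤) : 5 ≤ H.index := by
  have : Finite G := Nat.finite_of_card_ne_zero (by omega)
  have hdvd := card_dvd_factorial_index_of_isSimpleGroup hH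
  rw [hG] at hdvd
  by_contra! hlt
  interval_cases H.index <;> revert hdvd <;> decide

end Subgroup

theorem index_eq_six_of_mulEquiv_alternatingGroup_five
    {K : Subgroup (alternatingGroup (Fin 6))} (e : K ≃* alternatingGroup (Fin 5)) :
    K.index = 6 := by
  have hmul := K.card_mul_index
  rw [Nat.card_congr e.toEquiv, nat_card_alternatingGroup, nat_card_alternatingGroup,
    Nat.card_fin, Nat.card_fin] at hmul
  norm_num [Nat.factorial] at hmul
  omega

theorem stmt_17 (K L : Subgroup (alternatingGroup (Fin 6)))
    (hK : Nonempty (K ≃* alternatingGroup (Fin 5)))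
    (hL : Nonempty (L ≃* alternatingGroup (Fin 5)))
    (hne : K ≠ L) :
    Nat.card (K ⊓ L : Subgroup (alternatingGroup (Fin 6))) = 10 ∨
    Nat.card (K ⊓ L : Subgroup (alternatingGroup (Fin 6))) = 12 := by
  obtain ⟨eK⟩ := hK
  obtain ⟨eL⟩ := hL
  have : IsSimpleGroup K := eK.isSimpleGroup
  have hKL : ¬ K ≤ L := fun hle => hne <| Subgroup.eq_of_le_of_card_ge hle <| by
    rw [Nat.card_congr eK.toEquiv, Nat.card_congr eL.toEquiv]
  have hr5 : 5 ≤ (K ⊓ L).relIndex K :=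
    Subgroup.five_le_index_of_isSimpleGroup_of_card_eq_sixty
      (by rw [Nat.card_congr eK.toEquiv, nat_card_alternatingGroup, Nat.card_fin]; rfl)
      (by simpa [Subgroup.subgroupOf_eq_top] using hKL)
  have hrel : (K ⊓ L).relIndex K * 6 = (K ⊓ L).index := by
    simpa [index_eq_six_of_mulEquiv_alternatingGroup_five eK] using
      Subgroup.relIndex_mul_index (inf_le_left : K ⊓ L ≤ K)
  have hr6 : (K ⊓ L).relIndex K ≤ 6 := by
    have := Subgroup.index_inf_le (H := K) (K := L)
    rw [index_eq_six_of_mulEquiv_alternatingGroup_five eK,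
      index_eq_six_of_mulEquiv_alternatingGroup_five eL] at this
    omega
  have hcard : Nat.card (K ⊓ L : Subgroup (alternatingGroup (Fin 6))) * (K ⊓ L).index = 360 := by
    rw [Subgroup.card_mul_index, nat_card_alternatingGroup, Nat.card_fin]; rfl
  rw [← hrel] at hcard
  interval_cases (K ⊓ L).relIndex K <;> omega
end
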